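/- Strip containment for VH-gadget channels (composite geometric statement underlying Lemmas 'connection-shadow' and 'VHgadget'): Let m be a real number with m ≥ 2, let y₀, y₁ ∈ [0, 1/m³], and let 0 ≤ h ≤ m⁸. If a point r of the plane lies on the line through (0, y₀) and (m⁶, y₁), i.e. r = (0, y₀) + t • ((m⁶, y₁) − (0, y₀)) for some real t, and r.1 = m⁶ + h, then |r.2 − 1/(2·m³)| < 3/(2·m). Hence every point of the funnel of the channel within distance m⁸ of its far side lies in a horizontal strip of width 3/m centered in the channel. -/

import Mathlib

/-! The line meets `x = m⁶ + h` at parameter `t = 1 + h / m⁶ ∈ [1, 1 + m²]`. Measured from the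
channel's centre line, both anchor heights lie within `1/(2m³)`, and extrapolating to parameter `t`
multiplies this deviation by at most `2t - 1 ≤ 1 + 2m²`, which gives
`1/(2m³) + 1/m < 3/(2m)`. -/

lemma abs_sub_center_le_of_mem_Icc {a y : ℝ} (hy : y ∈ Set.Icc 0 a) : |y - a / 2| ≤ a / 2 :=
  abs_le.mpr ⟨by linarith [hy.1], by linarith [hy.2]⟩

lemma abs_extrapolate_sub_le {y₀ y₁ c w t : ℝ} (ht : 1 ≤ t)
    (h₀ : |y₀ - c| ≤ w) (h₁ : |y₁ - c| ≤ w) :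
    |y₀ + t * (y₁ - y₀) - c| ≤ (2 * t - 1) * w := by
  have hsplit : y₀ + t * (y₁ - y₀) - c = t * (y₁ - c) - (t - 1) * (y₀ - c) := by ring
  calc |y₀ + t * (y₁ - y₀) - c|
      ≤ |t * (y₁ - c)| + |(t - 1) * (y₀ - c)| := hsplit ▸ abs_sub _ _
    _ = t * |y₁ - c| + (t - 1) * |y₀ - c| := by
        rw [abs_mul, abs_mul, abs_of_nonneg (by linarith : (0 : ℝ) ≤ t),
          abs_of_nonneg (by linarith : (0 : ℝ) ≤ t - 1)]
    _ ≤ t * w + (t - 1) * w := by gcongr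
    _ = (2 * t - 1) * w := by ring

lemma one_add_two_mul_sq_div_lt {m : ℝ} (hm : 1 < m) :
    (1 + 2 * m ^ 2) / (2 * m ^ 3) < 3 / (2 * m) := by
  rw [div_lt_div_iff₀ (by positivity) (by positivity)]
  nlinarith [pow_pos (zero_lt_one.trans hm) 3]

/-- Strip containment for VH-gadget channels: any line through `(0, y₀)` and
`(m⁶, y₁)` with `y₀, y₁ ∈ [0, 1/m³]` meets the vertical line `x = m⁶ + h`
(with `0 ≤ h ≤ m⁸` and `m ≥ 2`) within the horizontal strip of width `3/m`
centered in the channel. -/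
theorem vh_channel_strip_containment
    (m y₀ y₁ h t : ℝ) (hm : 2 ≤ m)
    (hy₀ : y₀ ∈ Set.Icc (0 : ℝ) (1 / m ^ 3))
    (hy₁ : y₁ ∈ Set.Icc (0 : ℝ) (1 / m ^ 3))
    (hh : 0 ≤ h) (hh' : h ≤ m ^ 8)
    (r : ℝ × ℝ)
    (hr : r = ((0 : ℝ), y₀) + t • (((m ^ 6, y₁) : ℝ × ℝ) - ((0 : ℝ), y₀)))
    (hr1 : r.1 = m ^ 6 + h) :
    |r.2 - 1 / (2 * m ^ 3)| < 3 / (2 * m) := by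
  have hm6 : 0 < m ^ 6 := by positivity
  obtain ⟨hx, hy⟩ : r.1 = t * m ^ 6 ∧ r.2 = y₀ + t * (y₁ - y₀) := by subst hr; simp
  have ht : t = 1 + h / m ^ 6 := by field_simp; linarith
  have ht₁ : 1 ≤ t := ht ▸ le_add_of_nonneg_right (div_nonneg hh hm6.le)
  have ht₂ : t ≤ 1 + m ^ 2 := by
    rw [ht, add_le_add_iff_left, div_le_iff₀ hm6]
    linarith [show m ^ 2 * m ^ 6 = m ^ 8 by ring]
  have hcenter : 1 / (2 * m ^ 3) = 1 / m ^ 3 / 2 := by ring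
  calc |r.2 - 1 / (2 * m ^ 3)|
      ≤ (2 * t - 1) * (1 / (2 * m ^ 3)) := by
        rw [hy, hcenter]
        exact abs_extrapolate_sub_le ht₁ (abs_sub_center_le_of_mem_Icc hy₀)
          (abs_sub_center_le_of_mem_Icc hy₁)
    _ ≤ (1 + 2 * m ^ 2) / (2 * m ^ 3) := by
        rw [mul_one_div]; gcongr; linarith
    _ < 3 / (2 * m) := one_add_two_mul_sq_div_lt (by linarith)
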